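/- Let B ∈ 𝓑 and let S_{Π,l} be a wall. Then the function a ↦ {a}_B is discontinuous at some point of S_{Π,l} that lies on no other wall if and only if B splits along Π. -/

import Mathlib

open scoped BigOperators

attribute [local instance] Classical.propDecidable

noncomputable section

namespace Verlinde


variable {r : ℕ}

/-- The root `α^{ij} = e_i - e_j`, viewed as the linear functional `x_i - x_j`. -/
def stdRoot (r : ℕ) (i j : Fin r) : Fin r → ℝ :=
  fun t => (if t = i then 1 else 0) - (if t = j then 1 else 0)

/-- `B ∈ 𝓑`: an ordered tuple of roots forming a linear basis of
`V* = {a : ∑ i, a i = 0}`. -/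
def IsOB (r : ℕ) (B : Fin (r - 1) → Fin r → ℝ) : Prop :=
  (∀ m, ∃ i j, i ≠ j ∧ B m = stdRoot r i j) ∧
    LinearIndependent ℝ B ∧
    ∀ a : Fin r → ℝ, (∑ i, a i) = 0 → a ∈ Submodule.span ℝ (Set.range B)

/-- Coordinates of `a` with respect to the tuple `B` (junk unless such
coordinates exist; they are unique when `B` is linearly independent). -/
def coordsOf (B : Fin (r - 1) → Fin r → ℝ) (a : Fin r → ℝ) : Fin (r - 1) → ℝ :=
  if h : ∃ c : Fin (r - 1) → ℝ, a = ∑ j, c j • B j then h.choose else 0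

/-- The integer part `[a]_B ∈ Λ`. -/
def intPart (B : Fin (r - 1) → Fin r → ℝ) (a : Fin r → ℝ) : Fin r → ℝ :=
  ∑ j, (⌊coordsOf B a j⌋ : ℝ) • B j

/-- The fractional part `{a}_B`. -/
def fracPart (B : Fin (r - 1) → Fin r → ℝ) (a : Fin r → ℝ) : Fin r → ℝ :=
  a - intPart B a

/-- `a ∈ V*` is regular if all its `B`-coordinates are non-integral, for every `B ∈ 𝓑`,
i.e. `{a}_B ∈ ∑_j (0,1)·β^{[j]}` for every `B ∈ 𝓑`. -/
def IsRegular (r : ℕ) (a : Fin r → ℝ) : Prop :=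
  ∀ B, IsOB r B → ∀ j, Int.fract (coordsOf B a j) ≠ 0

/-- The flag `Fl(B)`: `Fl(B) j = span (β^{[j]}, …, β^{[r-1]})`. -/
def flagOf (B : Fin (r - 1) → Fin r → ℝ) : Fin (r - 1) → Submodule ℝ (Fin r → ℝ) :=
  fun j => Submodule.span ℝ {x | ∃ i, j ≤ i ∧ B i = x}

/-- `B ⊣ C`. -/
def Dashv (B C : Fin (r - 1) → Fin r → ℝ) : Prop :=
  ∀ τ : Equiv.Perm (Fin (r - 1)), flagOf (B ∘ τ) ≠ flagOf C

/-- A diagonal basis: a subset of `𝓑` of cardinality `(r-1)!` any two distinct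
members of which satisfy `B ⊣ C`. -/
def IsDiagonalBasis (r : ℕ) (D : Finset (Fin (r - 1) → Fin r → ℝ)) : Prop :=
  D.card = (r - 1).factorial ∧ (∀ B ∈ D, IsOB r B) ∧
    ∀ B ∈ D, ∀ C ∈ D, B ≠ C → Dashv B C

/-- The index of the last coordinate (`r` in `1`-indexed notation). -/
def lastI (r : ℕ) (h : 0 < r) : Fin r := ⟨r - 1, by omega⟩

/-- `ρ = ((r-1)/2, (r-3)/2, …, (1-r)/2)`. -/
def rho (r : ℕ) : Fin r → ℝ := fun i => ((r : ℝ) - 1) / 2 - (i : ℝ)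

/-- `σ · a`, where `(σ·a)_i = a_{σ⁻¹ i}`. -/
def permVec (σ : Equiv.Perm (Fin r)) (a : Fin r → ℝ) : Fin r → ℝ := fun i => a (σ⁻¹ i)

/-- A nontrivial (ordered) partition `Π = (Π′, Π″)`, encoded by `Π′ = P`:
both parts nonempty and `r ∈ Π″`. -/
def NontrivPart (r : ℕ) (h : 0 < r) (P : Finset (Fin r)) : Prop :=
  P.Nonempty ∧ lastI r h ∉ P

/-- The wall `S_{Π,l} ⊆ V*`. -/
def wallSet (r : ℕ) (P : Finset (Fin r)) (l : ℤ) : Set (Fin r → ℝ) :=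
  {c | (∑ i, c i) = 0 ∧ (∑ i ∈ P, c i) = (l : ℝ)}

/-- The simplex `Δ` of admissible parabolic weights. -/
def DeltaSet (r : ℕ) (h : 0 < r) : Set (Fin r → ℝ) :=
  {c | (∑ i, c i) = 0 ∧ (∀ i j : Fin r, i < j → c j < c i) ∧
    c ⟨0, h⟩ - c (lastI r h) < 1}

/-- The chamber of a (regular) point `c ∈ V*`. -/
def chamberOf (r : ℕ) (c : Fin r → ℝ) : Set (Fin r → ℝ) :=
  {b | (∑ i, b i) = 0 ∧ IsRegular r b ∧ ∀ B, IsOB r B → intPart B b = intPart B c}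

/-- `{i,j}` is an edge of `Tree(B)`. -/
def IsTreeEdge (B : Fin (r - 1) → Fin r → ℝ) (i j : Fin r) : Prop :=
  ∃ m, B m = stdRoot r i j ∨ B m = stdRoot r j i

/-- `B` splits along the partition `Π` (with `Π′ = P`): exactly one edge of
`Tree(B)` joins `Π′` and `Π″`. -/
def SplitsAlong (B : Fin (r - 1) → Fin r → ℝ) (P : Finset (Fin r)) : Prop :=
  ∃! pr : Fin r × Fin r, pr.1 ∈ P ∧ pr.2 ∉ P ∧ IsTreeEdge B pr.1 pr.2

/-- The linking root `β_link = α^{pq}` with `p ∈ Π′`, `q ∈ Π″`. -/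
def betaLink (B : Fin (r - 1) → Fin r → ℝ) (P : Finset (Fin r)) : Fin r → ℝ :=
  if h : ∃ pr : Fin r × Fin r, pr.1 ∈ P ∧ pr.2 ∉ P ∧ IsTreeEdge B pr.1 pr.2 then
    stdRoot r h.choose.1 h.choose.2
  else 0

/-!
On `V*` the `B`-coordinates `a ↦ aⱼ` are linear and `{a}_B = ∑ⱼ fract aⱼ • β^{[j]}`, so `{·}_B`
is discontinuous exactly at the points with an integral coordinate. For each `m`, the support `Q`
of `i ↦ coordₘ (α^{ir})` is the side of the edge `m` of `Tree(B)` away from `r`, and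
`coordₘ = ±∑_{i ∈ Q} aᵢ` on `V*`. So a discontinuity on the wall `S_{Π,l}` alone forces `Π′ = Q`,
crossed by the edge `m` only; conversely, if `m` is the only edge crossing `Π`, then
`coordₘ = ±∑_{i ∈ Π′} aᵢ` is integral on `S_{Π,l}`. Points lying on one wall only exist because
subset sums of distinct powers of two are distinct and `√2` is irrational.
-/

lemma existsUnique_exists_comm {α β : Type*} {R : α → β → Prop}
    (h₁ : ∀ a b b', R a b → R a b' → b = b') (h₂ : ∀ a a' b, R a b → R a' b → a = a') :
    (∃! b, ∃ a, R a b) ↔ ∃! a, ∃ b, R a b := by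
  constructor
  · rintro ⟨b, ⟨a, hab⟩, hu⟩
    exact ⟨a, ⟨b, hab⟩, fun a' ⟨b', h'⟩ => h₂ _ _ _ h' (hu b' ⟨a', h'⟩ ▸ hab)⟩
  · rintro ⟨a, ⟨b, hab⟩, hu⟩
    exact ⟨b, ⟨a, hab⟩, fun b' ⟨a', h'⟩ => h₁ _ _ _ (hu a' ⟨b', h'⟩ ▸ h') hab⟩

lemma finsetSum_stdRoot (Q : Finset (Fin r)) (i j : Fin r) :
    ∑ t ∈ Q, stdRoot r i j t = (if i ∈ Q then 1 else 0) - (if j ∈ Q then 1 else 0) := by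
  simp [stdRoot, Finset.sum_sub_distrib]

lemma sum_stdRoot_eq_zero (i j : Fin r) : ∑ t, stdRoot r i j t = 0 := by
  simp [finsetSum_stdRoot]

lemma stdRoot_self (i : Fin r) : stdRoot r i i = 0 := funext fun _ => sub_self _

lemma stdRoot_swap (i j : Fin r) : stdRoot r j i = -stdRoot r i j := by
  ext t; simp [stdRoot]

lemma stdRoot_sub_stdRoot (i j k : Fin r) : stdRoot r i k - stdRoot r j k = stdRoot r i j := by
  ext t; simp [stdRoot]

lemma stdRoot_apply_ne_zero_iff {i j t : Fin r} (hij : i ≠ j) :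
    stdRoot r i j t ≠ 0 ↔ t = i ∨ t = j := by
  by_cases hi : t = i <;> by_cases hj : t = j <;> simp_all [stdRoot]

open Filter Topology

section Coordinates

variable {B : Fin (r - 1) → Fin r → ℝ}

lemma IsOB.sum_apply_eq_zero (hB : IsOB r B) (m : Fin (r - 1)) : ∑ i, B m i = 0 := by
  obtain ⟨i, j, -, h⟩ := hB.1 m
  rw [h, sum_stdRoot_eq_zero]

lemma IsOB.coordsOf_eq (hB : IsOB r B) {a : Fin r → ℝ} {c : Fin (r - 1) → ℝ}
    (h : a = ∑ j, c j • B j) : coordsOf B a = c := by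
  have hex : ∃ c : Fin (r - 1) → ℝ, a = ∑ j, c j • B j := ⟨c, h⟩
  rw [coordsOf, dif_pos hex]
  exact funext (Fintype.linearIndependent_iffₛ.1 hB.2.1 _ _ (hex.choose_spec.symm.trans h))

lemma IsOB.sum_coordsOf_smul (hB : IsOB r B) {a : Fin r → ℝ} (ha : ∑ i, a i = 0) :
    ∑ j, coordsOf B a j • B j = a := by
  obtain ⟨c, hc⟩ := (Submodule.mem_span_range_iff_exists_fun ℝ).1 (hB.2.2 a ha)
  rw [hB.coordsOf_eq hc.symm, hc]

lemma IsOB.coordsOf_apply_self (hB : IsOB r B) (m : Fin (r - 1)) :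
    coordsOf B (B m) = Pi.single m 1 :=
  hB.coordsOf_eq (by simp [Pi.single_apply, ite_smul])

lemma IsOB.exists_linearMap_eq_coordsOf (hB : IsOB r B) :
    ∃ F : (Fin r → ℝ) →ₗ[ℝ] Fin (r - 1) → ℝ, ∀ a, ∑ i, a i = 0 → F a = coordsOf B a := by
  let b := Module.Basis.span hB.2.1
  obtain ⟨F, hF⟩ := LinearMap.exists_extend b.equivFun.toLinearMap
  refine ⟨F, fun a ha => ?_⟩
  have haW : a ∈ Submodule.span ℝ (Set.range B) := hB.2.2 a ha
  rw [show F a = b.equivFun ⟨a, haW⟩ from LinearMap.congr_fun hF ⟨a, haW⟩]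
  refine (hB.coordsOf_eq ?_).symm
  have := congrArg Subtype.val (b.sum_equivFun ⟨a, haW⟩)
  simp [b, Module.Basis.span_apply] at this
  exact this.symm

lemma IsOB.fracPart_eq_sum (hB : IsOB r B) {a : Fin r → ℝ} (ha : ∑ i, a i = 0) :
    fracPart B a = ∑ j, Int.fract (coordsOf B a j) • B j := by
  rw [fracPart, intPart]
  conv_lhs => enter [1]; rw [← hB.sum_coordsOf_smul ha]
  simp only [← Finset.sum_sub_distrib, ← sub_smul, Int.self_sub_floor]

lemma IsOB.sum_fracPart (hB : IsOB r B) {a : Fin r → ℝ} (ha : ∑ i, a i = 0) :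
    ∑ i, fracPart B a i = 0 := by
  simp [hB.fracPart_eq_sum ha, Finset.sum_apply, Finset.sum_comm (γ := Fin r),
    ← Finset.mul_sum, hB.sum_apply_eq_zero]

lemma IsOB.coordsOf_fracPart (hB : IsOB r B) {a : Fin r → ℝ} (ha : ∑ i, a i = 0) :
    coordsOf B (fracPart B a) = fun j => Int.fract (coordsOf B a j) :=
  hB.coordsOf_eq (hB.fracPart_eq_sum ha)

lemma IsOB.continuousWithinAt_fracPart (hB : IsOB r B) {z : Fin r → ℝ} (hz : ∑ i, z i = 0)
    (h : ∀ j, ∀ k : ℤ, coordsOf B z j ≠ k) :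
    ContinuousWithinAt (fracPart B) {c | ∑ i, c i = 0} z := by
  obtain ⟨F, hF⟩ := hB.exists_linearMap_eq_coordsOf
  have hG : ContinuousAt (fun a => ∑ j, Int.fract (F a j) • B j) z := by
    refine tendsto_finsetSum _ fun j _ => ?_
    show ContinuousAt (fun a => Int.fract (F a j) • B j) z
    have hFj : Continuous fun a => F a j :=
      (continuous_apply j).comp F.continuous_of_finiteDimensional
    refine ((continuousAt_fract ?_).comp hFj.continuousAt).smul continuousAt_const
    rw [hF z hz]
    exact h j _
  refine hG.continuousWithinAt.congr (fun a ha => ?_) ?_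
  · rw [hB.fracPart_eq_sum ha, hF a ha]
  · rw [hB.fracPart_eq_sum hz, hF z hz]

lemma IsOB.not_continuousWithinAt_fracPart (hB : IsOB r B) {z : Fin r → ℝ}
    (hz : ∑ i, z i = 0) {m : Fin (r - 1)} {k : ℤ} (hk : coordsOf B z m = k) :
    ¬ContinuousWithinAt (fracPart B) {c | ∑ i, c i = 0} z := by
  intro hcont
  obtain ⟨F, hF⟩ := hB.exists_linearMap_eq_coordsOf
  let γ : ℝ → Fin r → ℝ := fun x => z + (x - k) • B m
  have hγV : ∀ x, ∑ i, γ x i = 0 := by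
    simp [γ, Finset.sum_add_distrib, ← Finset.mul_sum, hz, hB.sum_apply_eq_zero]
  have hγ : Tendsto γ (𝓝[<] (k : ℝ)) (𝓝[{c | ∑ i, c i = 0}] z) := by
    refine tendsto_nhdsWithin_iff.2 ⟨?_, Eventually.of_forall hγV⟩
    have : Continuous γ := by fun_prop
    simpa [γ] using this.continuousAt.tendsto.mono_left (nhdsWithin_le_nhds (a := (k : ℝ)))
  have hcoord : ∀ x, F (fracPart B (γ x)) m = Int.fract x := by
    intro x
    rw [hF _ (hB.sum_fracPart (hγV x)), hB.coordsOf_fracPart (hγV x), ← hF _ (hγV x)]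
    simp [γ, hF z hz, hF _ (hB.sum_apply_eq_zero m), hB.coordsOf_apply_self, hk]
  have hfract : Tendsto Int.fract (𝓝[<] (k : ℝ)) (𝓝 0) := by
    have hφ : Continuous fun a => F a m :=
      (continuous_apply m).comp F.continuous_of_finiteDimensional
    have := (hφ.tendsto _).comp (hcont.tendsto.comp hγ)
    simpa [Function.comp_def, hcoord, hF _ (hB.sum_fracPart hz), hB.coordsOf_fracPart hz, hk]
      using this
  exact zero_ne_one (tendsto_nhds_unique hfract (tendsto_fract_left' k))

/-- The edge of `Tree(B)` with label `m` joins `Q` to its complement. -/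
def Crosses (B : Fin (r - 1) → Fin r → ℝ) (Q : Finset (Fin r)) (m : Fin (r - 1)) : Prop :=
  ∑ i ∈ Q, B m i ≠ 0

lemma IsOB.finsetSum_eq_sum_coordsOf_mul (hB : IsOB r B) {a : Fin r → ℝ} (ha : ∑ i, a i = 0)
    (Q : Finset (Fin r)) : ∑ i ∈ Q, a i = ∑ j, coordsOf B a j * ∑ i ∈ Q, B j i := by
  conv_lhs => rw [← hB.sum_coordsOf_smul ha]
  simp only [Finset.sum_apply, Pi.smul_apply, smul_eq_mul, Finset.mul_sum]
  exact Finset.sum_comm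

lemma IsOB.finsetSum_eq_coordsOf_mul (hB : IsOB r B) {a : Fin r → ℝ} (ha : ∑ i, a i = 0)
    {Q : Finset (Fin r)} {m : Fin (r - 1)} (hQ : ∀ j ≠ m, ¬Crosses B Q j) :
    ∑ i ∈ Q, a i = coordsOf B a m * ∑ i ∈ Q, B m i := by
  rw [hB.finsetSum_eq_sum_coordsOf_mul ha Q]
  refine Finset.sum_eq_single m (fun j _ hj => ?_) (by simp)
  rw [not_not.1 (hQ j hj), mul_zero]

lemma IsOB.exists_crosses (hB : IsOB r B) {Q : Finset (Fin r)} (hQ : Q.Nonempty) {ℓ : Fin r}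
    (hℓ : ℓ ∉ Q) : ∃ j, Crosses B Q j := by
  by_contra! h
  obtain ⟨i, hi⟩ := hQ
  have := hB.finsetSum_eq_sum_coordsOf_mul (sum_stdRoot_eq_zero i ℓ) Q
  simp [finsetSum_stdRoot, hi, hℓ, not_not.1 (h _)] at this

lemma IsOB.exists_crosses_iff_eq (hB : IsOB r B) (ℓ : Fin r) (m : Fin (r - 1)) :
    ∃ Q : Finset (Fin r), ℓ ∉ Q ∧ ∀ j, Crosses B Q j ↔ j = m := by
  obtain ⟨F, hF⟩ := hB.exists_linearMap_eq_coordsOf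
  let w : Fin r → ℝ := fun i => F (stdRoot r i ℓ) m
  have hw : ∀ j i i', B j = stdRoot r i i' → w i - w i' = if m = j then 1 else 0 := by
    intro j i i' h
    rw [← Pi.sub_apply (F _) (F _) m, ← map_sub, stdRoot_sub_stdRoot, ← h,
      hF _ (hB.sum_apply_eq_zero j), hB.coordsOf_apply_self, Pi.single_apply]
  -- `w` is constant along every edge of `Tree(B)` but `m`, so its support is cut by `m` alone.
  let Q := Finset.univ.filter fun i => w i ≠ 0
  have hℓ : ℓ ∉ Q := by simp [Q, w, stdRoot_self]
  have hcross : ∀ j, Crosses B Q j → j = m := by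
    intro j hj
    by_contra hjm
    obtain ⟨i, i', -, h⟩ := hB.1 j
    have hii' := hw j i i' h
    rw [if_neg (Ne.symm hjm), sub_eq_zero] at hii'
    simp [Crosses, h, finsetSum_stdRoot, Q, hii'] at hj
  obtain ⟨i, i', -, h⟩ := hB.1 m
  have hQ : Q.Nonempty := by
    have hii' := hw m i i' h
    rw [if_pos rfl] at hii'
    by_cases hi : w i = 0
    · exact ⟨i', by simp [Q]; linarith⟩
    · exact ⟨i, by simpa [Q] using hi⟩
  obtain ⟨j, hj⟩ := hB.exists_crosses hQ hℓ
  exact ⟨Q, hℓ, fun j' => ⟨hcross j', fun h => h ▸ hcross j hj ▸ hj⟩⟩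

lemma IsOB.eq_of_eq_or_eq_neg (hB : IsOB r B) {m m' : Fin (r - 1)}
    (h : B m = B m' ∨ B m = -B m') : m = m' := by
  rcases h with h | h
  · exact hB.2.1.injective h
  · by_contra hne
    have := Fintype.linearIndependent_iff.1 hB.2.1 (Pi.single m 1 + Pi.single m' 1)
      (by simp [add_smul, Finset.sum_add_distrib, Pi.single_apply, ite_smul, h]) m
    simp [hne] at this

lemma IsOB.crosses_iff (hB : IsOB r B) {Q : Finset (Fin r)} {m : Fin (r - 1)} :
    Crosses B Q m ↔ ∃ p q, p ∈ Q ∧ q ∉ Q ∧ (B m = stdRoot r p q ∨ B m = stdRoot r q p) := by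
  obtain ⟨i, j, -, h⟩ := hB.1 m
  constructor
  · intro hm
    rw [Crosses, h, finsetSum_stdRoot] at hm
    by_cases hi : i ∈ Q <;> by_cases hj : j ∈ Q <;> simp [hi, hj] at hm
    · exact ⟨i, j, hi, hj, Or.inl h⟩
    · exact ⟨j, i, hj, hi, Or.inr h⟩
  · rintro ⟨p, q, hp, hq, h' | h'⟩ <;> simp [Crosses, h', finsetSum_stdRoot, hp, hq]

lemma IsOB.exists_int_of_crosses (hB : IsOB r B) {Q : Finset (Fin r)} {m : Fin (r - 1)}
    (hm : Crosses B Q m) : ∃ ε : ℤ, (ε = 1 ∨ ε = -1) ∧ ∑ i ∈ Q, B m i = ε := by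
  obtain ⟨p, q, hp, hq, h | h⟩ := hB.crosses_iff.1 hm
  · exact ⟨1, Or.inl rfl, by simp [h, finsetSum_stdRoot, hp, hq]⟩
  · exact ⟨-1, Or.inr rfl, by simp [h, finsetSum_stdRoot, hp, hq]⟩

lemma IsOB.splitsAlong_iff (hB : IsOB r B) {P : Finset (Fin r)} :
    SplitsAlong B P ↔ ∃! m, Crosses B P m := by
  let R : Fin (r - 1) → Fin r × Fin r → Prop := fun m pr =>
    pr.1 ∈ P ∧ pr.2 ∉ P ∧ (B m = stdRoot r pr.1 pr.2 ∨ B m = stdRoot r pr.2 pr.1)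
  have hsupp : ∀ m pr, R m pr → ∀ t, B m t ≠ 0 ↔ t = pr.1 ∨ t = pr.2 := by
    rintro m ⟨p, q⟩ ⟨hp, hq, h | h⟩ t <;> rw [h, stdRoot_apply_ne_zero_iff] <;> grind
  have h₁ : ∀ m pr pr', R m pr → R m pr' → pr = pr' := by
    rintro m ⟨p, q⟩ ⟨p', q'⟩ hR hR'
    have hp := (hsupp m _ hR' p).1 ((hsupp m _ hR p).2 (Or.inl rfl))
    have hq := (hsupp m _ hR' q).1 ((hsupp m _ hR q).2 (Or.inr rfl))
    obtain ⟨hpP, hqP, -⟩ := hR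
    obtain ⟨hpP', hqP', -⟩ := hR'
    grind
  have h₂ : ∀ m m' pr, R m pr → R m' pr → m = m' := by
    rintro m m' ⟨p, q⟩ ⟨-, -, h⟩ ⟨-, -, h'⟩
    refine hB.eq_of_eq_or_eq_neg ?_
    rcases h with h | h <;> rcases h' with h' | h' <;> simp [h, h', stdRoot_swap p q]
  calc SplitsAlong B P ↔ ∃! pr, ∃ m, R m pr := by
        simp only [SplitsAlong, IsTreeEdge, R, exists_and_left]
    _ ↔ ∃! m, ∃ pr, R m pr := existsUnique_exists_comm h₁ h₂
    _ ↔ ∃! m, Crosses B P m := by simp only [hB.crosses_iff, Prod.exists, R]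

end Coordinates

lemma sum_two_pow_injective :
    Function.Injective fun Q : Finset (Fin r) => ∑ i ∈ Q, (2 : ℤ) ^ (i : ℕ) := by
  intro Q Q' (h : ∑ i ∈ Q, (2 : ℤ) ^ (i : ℕ) = ∑ i ∈ Q', (2 : ℤ) ^ (i : ℕ))
  have h' : ∑ i ∈ Q.map Fin.valEmbedding, 2 ^ i = ∑ i ∈ Q'.map Fin.valEmbedding, 2 ^ i := by
    simp only [Finset.sum_map, Fin.valEmbedding_apply]
    exact_mod_cast h
  exact Finset.map_injective _ (Finset.geomSum_injective le_rfl h')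

lemma exists_finsetSum_eq_int_iff {P : Finset (Fin r)} (hP : P.Nonempty) (l : ℤ) :
    ∃ x : Fin r → ℝ, ∀ Q : Finset (Fin r), Q.Nonempty → ∀ l' : ℤ,
      (∑ i ∈ Q, x i = l' ↔ Q = P ∧ l' = l) := by
  obtain ⟨p, hp⟩ := hP
  let N : Finset (Fin r) → ℤ := fun Q => ∑ i ∈ Q, 2 ^ (i : ℕ)
  refine ⟨fun i => √2 * 2 ^ (i : ℕ) + if i = p then l - √2 * N P else 0, fun Q hQ l' => ?_⟩
  have hsum : ∑ i ∈ Q, (√2 * 2 ^ (i : ℕ) + if i = p then l - √2 * N P else 0) =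
      ((if p ∈ Q then l else 0 : ℤ) : ℝ) + √2 * ((N Q - if p ∈ Q then N P else 0 : ℤ) : ℝ) := by
    simp only [Finset.sum_add_distrib, Finset.sum_ite_eq', N, ← Finset.mul_sum]
    split_ifs <;> push_cast <;> ring
  rw [hsum]
  by_cases hQP : Q = P
  · subst hQP
    simp [hp, eq_comm]
  · have hn : N Q - (if p ∈ Q then N P else 0) ≠ 0 := by
      split_ifs
      · exact sub_ne_zero.2 (sum_two_pow_injective.ne hQP)
      · simpa [N] using sum_two_pow_injective.ne hQ.ne_empty
    simp only [hQP, false_and, iff_false]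
    exact ((irrational_sqrt_two.mul_intCast hn).intCast_add _).ne_int l'

lemma exists_mem_wallSet_not_mem_other_wallSet (h : 0 < r) {P : Finset (Fin r)}
    (hP : NontrivPart r h P) (l : ℤ) :
    ∃ z ∈ wallSet r P l, ∀ (Q : Finset (Fin r)) (l' : ℤ), NontrivPart r h Q →
      ¬(Q = P ∧ l' = l) → z ∉ wallSet r Q l' := by
  obtain ⟨x, hx⟩ := exists_finsetSum_eq_int_iff hP.1 l
  let z := x - (∑ i, x i) • Pi.single (lastI r h) 1
  have hz : ∀ Q, lastI r h ∉ Q → ∑ i ∈ Q, z i = ∑ i ∈ Q, x i := fun Q hQ =>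
    Finset.sum_congr rfl fun i hi => by simp [z, ne_of_mem_of_not_mem hi hQ]
  refine ⟨z, ⟨by simp [z, Pi.single_apply], ?_⟩, fun Q l' hQ hne hzQ => hne ((hx Q hQ.1 l').1 ?_)⟩
  · rw [hz P hP.2]
    exact (hx P hP.1 l).2 ⟨rfl, rfl⟩
  · rw [← hz Q hQ.2]
    exact hzQ.2

/-- (Lemma `lemmaBBwall`.)  The fractional part `a ↦ {a}_B`
(as a function on `V*`) is discontinuous at some point of the wall `S_{Π,l}`
lying on no other wall if and only if `Tree(B)` splits along `Π`. -/
theorem fracPart_discontinuous_on_wall_iff_splits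
    (r : ℕ) (hr : 2 ≤ r)
    (B : Fin (r - 1) → Fin r → ℝ) (hB : IsOB r B)
    (P : Finset (Fin r)) (hP : NontrivPart r (by omega) P) (l : ℤ) :
    (∃ z, z ∈ wallSet r P l ∧
      (∀ (Q : Finset (Fin r)) (l' : ℤ), NontrivPart r (by omega) Q →
        ¬(Q = P ∧ l' = l) → z ∉ wallSet r Q l') ∧
      ¬ContinuousWithinAt (fracPart B) {c : Fin r → ℝ | (∑ i, c i) = 0} z) ↔
    SplitsAlong B P := by
  rw [hB.splitsAlong_iff]
  constructor
  · rintro ⟨z, ⟨hz, -⟩, hgen, hdisc⟩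
    obtain ⟨m, k, hk⟩ : ∃ m, ∃ k : ℤ, coordsOf B z m = k := by
      by_contra! h
      exact hdisc (hB.continuousWithinAt_fracPart hz h)
    obtain ⟨Q, hℓQ, hQ⟩ := hB.exists_crosses_iff_eq (lastI r (by omega)) m
    obtain ⟨ε, -, hε⟩ := hB.exists_int_of_crosses ((hQ m).2 rfl)
    have hQP : Q = P := by
      by_contra hQP
      refine hgen Q (k * ε) ⟨Finset.nonempty_of_sum_ne_zero ((hQ m).2 rfl), hℓQ⟩
        (fun h => hQP h.1) ⟨hz, ?_⟩
      rw [hB.finsetSum_eq_coordsOf_mul hz (fun j hj hc => hj ((hQ j).1 hc)), hk, hε]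
      push_cast
      ring
    exact hQP ▸ ⟨m, (hQ m).2 rfl, fun j => (hQ j).1⟩
  · rintro ⟨m, hm, huniq⟩
    obtain ⟨z, ⟨hz, hzP⟩, hgen⟩ := exists_mem_wallSet_not_mem_other_wallSet (by omega) hP l
    refine ⟨z, ⟨hz, hzP⟩, hgen, ?_⟩
    obtain ⟨ε, hε1, hε⟩ := hB.exists_int_of_crosses hm
    have hl := hB.finsetSum_eq_coordsOf_mul hz (fun j hj hc => hj (huniq j hc))
    rw [hzP, hε] at hl
    refine hB.not_continuousWithinAt_fracPart hz (m := m) (k := l * ε) ?_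
    rcases hε1 with rfl | rfl <;> push_cast at hl ⊢ <;> linarith

end Verlinde
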